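/- arXiv:2105.01225 — 7 statements merged into one kernel-verified Lean document; each statement's English description precedes it below -/
import Mathlib

section
/- Let V be a finite type, C : V × V → ℝ a cost function, and n ≥ 1 a natural number with n < |V|. Let c* be the least value in { C(u,v) : u, v ∈ V } such that the threshold relation r_{c*} has at most n strongly connected components. Then for every set of edges E ⊆ V × V whose induced relation has at most n strongly connected components, E is nonempty and max_{(u,v) ∈ E} C(u,v) ≥ c*. In other words, the threshold subgraph at c* minimizes the maximum edge cost among all subgraphs on V with at most n SCCs. -/
/-- The strongly-connected-component equivalence of a relation `r`. -/
def sccSetoid {V : Type*} (r : V → V → Prop) : Setoid V where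
  r u v := Relation.ReflTransGen r u v ∧ Relation.ReflTransGen r v u
  iseqv := by
    refine ⟨fun _ => ⟨.refl, .refl⟩, fun h => ⟨h.2, h.1⟩, fun h₁ h₂ => ⟨h₁.1.trans h₂.1, h₂.2.trans h₁.2⟩⟩

/-- The number of strongly connected components of the relation `r`. -/
noncomputable def numSCC {V : Type*} (r : V → V → Prop) : ℕ :=
  Nat.card (Quotient (sccSetoid r))

/-- The threshold relation `r_c` of a cost function `C`. -/
def thresholdRel {V : Type*} (C : V × V → ℝ) (c : ℝ) (u v : V) : Prop :=
  C (u, v) ≤ c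

lemma numSCC_antitone {V : Type*} [Fintype V] {r s : V → V → Prop}
    (h : ∀ u v, r u v → s u v) : numSCC s ≤ numSCC r := by
  apply Nat.card_le_card_of_surjective
    (@Quotient.map V V (sccSetoid r) (sccSetoid s) id
      (fun a b hab => ⟨Relation.ReflTransGen.mono h a b hab.1, Relation.ReflTransGen.mono h b a hab.2⟩))
  intro q
  induction q using Quotient.ind with
  | _ x => exact ⟨⟦x⟧, rfl⟩

lemma numSCC_bot {V : Type*} [Fintype V] :
    numSCC (fun _ _ : V => False) = Fintype.card V := by
  rw [← Nat.card_eq_fintype_card, numSCC]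
  apply (Nat.card_eq_of_bijective (Quotient.mk _) ?_).symm
  constructor
  · intro u v huv
    have : (sccSetoid (fun _ _ : V => False)).r u v := Quotient.exact huv
    have h1 := this.1
    cases h1.cases_head with
    | inl h => exact h
    | inr h => exact absurd h.choose_spec.1 id
  · intro q
    induction q using Quotient.ind with
    | _ x => exact ⟨x, rfl⟩

theorem threshold_subgraph_minimizes_max_cost
    {V : Type*} [Fintype V] (C : V × V → ℝ) (n : ℕ) (hn : 1 ≤ n)
    (hcard : n < Fintype.card V) (cstar : ℝ)
    (hleast : IsLeast
      {c : ℝ | (∃ u v : V, C (u, v) = c) ∧ numSCC (thresholdRel C c) ≤ n} cstar)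
    (E : Set (V × V)) (hE : numSCC (fun u v : V => (u, v) ∈ E) ≤ n) :
    E.Nonempty ∧ ∃ e ∈ E, cstar ≤ C e := by
  have hne : E.Nonempty := by
    by_contra h
    rw [Set.not_nonempty_iff_eq_empty] at h
    subst h
    simp only [Set.mem_empty_iff_false] at hE
    rw [numSCC_bot] at hE
    omega
  refine ⟨hne, ?_⟩
  obtain ⟨e₀, he₀, hmax⟩ := Set.exists_max_image E C E.toFinite hne
  refine ⟨e₀, he₀, ?_⟩
  apply hleast.2
  refine ⟨⟨e₀.1, e₀.2, by simp⟩, ?_⟩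
  calc numSCC (thresholdRel C (C e₀)) ≤ numSCC (fun u v : V => (u, v) ∈ E) :=
        numSCC_antitone (fun u v huv => hmax _ huv)
    _ ≤ n := hE
end

section
/- Let V be a finite type, r : V → V → Prop a relation, and u, v ∈ V with r u v but u and v not in the same strongly connected component of r (i.e., v does not reach u under r). Let r' be the relation obtained from r by removing the single edge (u,v). Then for all a, b ∈ V, a and b are in the same strongly connected component of r' if and only if they are in the same strongly connected component of r; i.e., removing an edge that connects two different SCCs does not change the SCC partition. -/
/-- Two vertices are in the same strongly connected component of `r`. -/
def sameSCC {V : Type*} (r : V → V → Prop) (u v : V) : Prop :=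
  Relation.ReflTransGen r u v ∧ Relation.ReflTransGen r v u

private lemma key {V : Type*} (r : V → V → Prop) (u v : V)
    (hnot : ¬ Relation.ReflTransGen r v u) {a b : V}
    (hab : Relation.ReflTransGen r a b) (hba : Relation.ReflTransGen r b a) :
    Relation.ReflTransGen (fun x y : V => r x y ∧ ¬(x = u ∧ y = v)) a b := by
  revert hba
  induction hab using Relation.ReflTransGen.head_induction_on with
  | refl => exact fun _ => .refl
  | head h ht ih =>
    intro hba
    refine Relation.ReflTransGen.head ⟨h, ?_⟩ (ih (hba.tail h))
    rintro ⟨rfl, rfl⟩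
    exact hnot (ht.trans hba)
theorem remove_cross_scc_edge_preserves_scc
    {V : Type*} [Fintype V] (r : V → V → Prop) (u v : V)
    (huv : r u v) (hnot : ¬ Relation.ReflTransGen r v u) :
    ∀ a b : V,
      sameSCC (fun x y : V => r x y ∧ ¬(x = u ∧ y = v)) a b ↔ sameSCC r a b := by
  intro a b
  constructor
  · rintro ⟨h1, h2⟩
    exact ⟨Relation.ReflTransGen.mono (fun x y (h : r x y ∧ ¬(x = u ∧ y = v)) => h.1) _ _ h1, Relation.ReflTransGen.mono (fun x y (h : r x y ∧ ¬(x = u ∧ y = v)) => h.1) _ _ h2⟩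
  · rintro ⟨h1, h2⟩
    exact ⟨key r u v hnot h1 h2, key r u v hnot h2 h1⟩
end

section
/- Let V be a finite type, I ⊊ V a nonempty proper subset, and V' = V \ I. Let E ⊆ E' be two edge sets contained in (V × V) \ (I × I). If E satisfies the matching criterion, then E' satisfies the matching criterion; i.e., the matching criterion is preserved under adding edges. -/
/-- The SCC equivalence on `V' = V \ I` determined by the edges of `E`
lying within `V' × V'`. -/
def sccSetoidOn {V : Type*} (I : Set V) (E : Set (V × V)) : Setoid ↥Iᶜ :=
  sccSetoid (fun a b : ↥Iᶜ => ((a : V), (b : V)) ∈ E)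

/-- The matching criterion: there is an injective map `f` from the SCC classes
of `V' = V \ I` (with respect to the edges of `E` within `V' × V'`) to `I` such
that each class `Q` contains `q₁, q₂` with `(q₁, f Q) ∈ E` and `(f Q, q₂) ∈ E`. -/
def MatchingCriterion {V : Type*} (I : Set V) (E : Set (V × V)) : Prop :=
  ∃ f : Quotient (sccSetoidOn I E) → V,
    Function.Injective f ∧ (∀ Q, f Q ∈ I) ∧
    ∀ Q : Quotient (sccSetoidOn I E), ∃ q₁ q₂ : ↥Iᶜ,
      Quotient.mk (sccSetoidOn I E) q₁ = Q ∧ Quotient.mk (sccSetoidOn I E) q₂ = Q ∧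
      ((q₁ : V), f Q) ∈ E ∧ (f Q, (q₂ : V)) ∈ E

theorem matchingCriterion_mono {V : Type*} [Fintype V]
    (I : Set V) (hI : I.Nonempty) (hIproper : I ≠ Set.univ)
    (E E' : Set (V × V))
    (hEsub : ∀ p ∈ E, ¬(p.1 ∈ I ∧ p.2 ∈ I))
    (hE'sub : ∀ p ∈ E', ¬(p.1 ∈ I ∧ p.2 ∈ I))
    (hEE' : E ⊆ E')
    (h : MatchingCriterion I E) : MatchingCriterion I E' := by
  classical
  obtain ⟨f, hfinj, hfI, hf⟩ := h
  -- natural surjection from E-classes to E'-classes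
  set π : Quotient (sccSetoidOn I E) → Quotient (sccSetoidOn I E') :=
    Quotient.map' id (fun a b hab =>
      ⟨Relation.ReflTransGen.mono (fun x y hxy => hEE' hxy) _ _ hab.1, Relation.ReflTransGen.mono (fun x y hxy => hEE' hxy) _ _ hab.2⟩) with hπ
  have hπmk : ∀ q : ↥Iᶜ, π (Quotient.mk _ q) = Quotient.mk _ q := fun q => rfl
  have hπsurj : Function.Surjective π := by
    intro Q'
    induction Q' using Quotient.ind with
    | _ q => exact ⟨Quotient.mk _ q, rfl⟩
  refine ⟨f ∘ Function.surjInv hπsurj, ?_, fun Q => hfI _, ?_⟩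
  · intro a b hab
    have := hfinj hab
    have ha := Function.surjInv_eq hπsurj a
    have hb := Function.surjInv_eq hπsurj b
    rw [← ha, ← hb, this]
  · intro Q'
    obtain ⟨q₁, q₂, h₁, h₂, he₁, he₂⟩ := hf (Function.surjInv hπsurj Q')
    refine ⟨q₁, q₂, ?_, ?_, hEE' he₁, hEE' he₂⟩
    · rw [← hπmk q₁, h₁, Function.surjInv_eq hπsurj Q']
    · rw [← hπmk q₂, h₂, Function.surjInv_eq hπsurj Q']
end

section
/- Let V be a finite type, I ⊊ V a nonempty proper subset with V' = V \ I nonempty, and C : V × V → ℝ a cost function. Let c* be the least value in { C(u,v) : u, v ∈ V } such that E_{c*} satisfies the matching criterion. Then every edge set E ⊆ (V × V) \ (I × I) satisfying the matching criterion is nonempty and contains an edge (u,v) with C(u,v) ≥ c*; i.e., E_{c*} minimizes the maximum edge cost among all edge sets satisfying the matching criterion. -/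
/-- The threshold edge set `E_c`: all edges outside `I × I` of cost at most `c`. -/
def thresholdEdges {V : Type*} (I : Set V) (C : V × V → ℝ) (c : ℝ) : Set (V × V) :=
  {p : V × V | ¬(p.1 ∈ I ∧ p.2 ∈ I) ∧ C p ≤ c}

theorem threshold_edges_minimize_max_cost_among_matching
    {V : Type*} [Fintype V] (I : Set V) (hI : I.Nonempty) (hIproper : I ≠ Set.univ)
    (C : V × V → ℝ) (cstar : ℝ)
    (hleast : IsLeast {c : ℝ | (∃ u v : V, C (u, v) = c) ∧
      MatchingCriterion I (thresholdEdges I C c)} cstar)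
    (E : Set (V × V)) (hEsub : ∀ p ∈ E, ¬(p.1 ∈ I ∧ p.2 ∈ I))
    (hE : MatchingCriterion I E) :
    E.Nonempty ∧ ∃ e ∈ E, cstar ≤ C e := by
  -- V' nonempty
  obtain ⟨v, hv⟩ : ∃ v : V, v ∉ I := by
    by_contra h
    push_neg at h
    exact hIproper (Set.eq_univ_of_forall h)
  obtain ⟨f, hfinj, hfI, hfw⟩ := hE
  obtain ⟨q₁, q₂, -, -, hq₁, -⟩ := hfw (Quotient.mk _ ⟨v, hv⟩)
  have hEne : E.Nonempty := ⟨_, hq₁⟩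
  refine ⟨hEne, ?_⟩
  -- maximal-cost edge of E
  obtain ⟨a, haE, hamax⟩ := Set.Finite.exists_maximalFor C E (Set.toFinite E) hEne
  have hmax : ∀ b ∈ E, C b ≤ C a := by
    intro b hb
    rcases le_total (C b) (C a) with h | h
    · exact h
    · exact hamax hb h
  set c : ℝ := C a with hc
  have hsub : E ⊆ thresholdEdges I C c := fun p hp => ⟨hEsub p hp, hmax p hp⟩
  -- matching criterion is monotone
  have hmono : MatchingCriterion I (thresholdEdges I C c) := by
    set E' := thresholdEdges I C c
    have hrel : ∀ a b : ↥Iᶜ, (sccSetoidOn I E).r a b → (sccSetoidOn I E').r a b := by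
      intro x y hxy
      exact ⟨Relation.ReflTransGen.mono (fun p q h => hsub h) _ _ hxy.1, Relation.ReflTransGen.mono (fun p q h => hsub h) _ _ hxy.2⟩
    let π : Quotient (sccSetoidOn I E) → Quotient (sccSetoidOn I E') :=
      Quotient.map id (fun x y h => hrel x y h)
    have hπ : ∀ q : ↥Iᶜ, π (Quotient.mk _ q) = Quotient.mk _ q := fun q => rfl
    have hπsurj : Function.Surjective π := by
      intro Q'
      obtain ⟨q, rfl⟩ := Quotient.exists_rep Q'
      exact ⟨Quotient.mk _ q, rfl⟩
    obtain ⟨s, hs⟩ := hπsurj.hasRightInverse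
    have hsinj : Function.Injective s := Function.RightInverse.injective hs
    refine ⟨f ∘ s, hfinj.comp hsinj, fun Q => hfI (s Q), ?_⟩
    intro Q'
    obtain ⟨r₁, r₂, h1, h2, h3, h4⟩ := hfw (s Q')
    refine ⟨r₁, r₂, ?_, ?_, hsub h3, hsub h4⟩
    · rw [← hs Q', ← h1]; rfl
    · rw [← hs Q', ← h2]; rfl
  have hcmem : c ∈ {c : ℝ | (∃ u v : V, C (u, v) = c) ∧
      MatchingCriterion I (thresholdEdges I C c)} := by
    exact ⟨⟨a.1, a.2, by rw [Prod.mk.eta]⟩, hmono⟩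
  exact ⟨a, haE, hleast.2 hcmem⟩
end

section
/- Let V be a finite type, I ⊊ V a nonempty proper subset with V' = V \ I nonempty, and C : V × V → ℝ a cost function. If c ≤ c' are real numbers and E_c satisfies the matching criterion, then E_{c'} satisfies the matching criterion; i.e., satisfaction of the matching criterion by threshold edge sets is upward closed in the threshold. -/
theorem matchingCriterion_threshold_upward_closed
    {V : Type*} [Fintype V] (I : Set V) (hI : I.Nonempty) (hIproper : I ≠ Set.univ)
    (C : V × V → ℝ) (c c' : ℝ) (hcc : c ≤ c')
    (h : MatchingCriterion I (thresholdEdges I C c)) :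
    MatchingCriterion I (thresholdEdges I C c') := by
  obtain ⟨f, hinj, hmem, hwit⟩ := h
  have hsub : thresholdEdges I C c ⊆ thresholdEdges I C c' :=
    fun p hp => ⟨hp.1, hp.2.trans hcc⟩
  have hmono : ∀ a b : ↥Iᶜ, (sccSetoidOn I (thresholdEdges I C c)) a b →
      (sccSetoidOn I (thresholdEdges I C c')) a b :=
    fun a b hab => ⟨Relation.ReflTransGen.mono (fun x y hh => hsub hh) a b hab.1, Relation.ReflTransGen.mono (fun x y hh => hsub hh) b a hab.2⟩
  let π : Quotient (sccSetoidOn I (thresholdEdges I C c)) →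
      Quotient (sccSetoidOn I (thresholdEdges I C c')) := Quotient.map id hmono
  have hπsurj : Function.Surjective π := by
    intro Q'
    obtain ⟨a, rfl⟩ := Quotient.exists_rep Q'
    exact ⟨Quotient.mk _ a, rfl⟩
  refine ⟨fun Q' => f (Function.surjInv hπsurj Q'), ?_, fun Q' => hmem _, ?_⟩
  · intro Q₁ Q₂ hq
    have hq' : f (Function.surjInv hπsurj Q₁) = f (Function.surjInv hπsurj Q₂) := hq
    have h1 := Function.surjInv_eq hπsurj Q₁
    have h2 := Function.surjInv_eq hπsurj Q₂
    rw [← h1, ← h2, hinj hq']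
  · intro Q'
    obtain ⟨q₁, q₂, h₁, h₂, he₁, he₂⟩ := hwit (Function.surjInv hπsurj Q')
    have hπ := Function.surjInv_eq hπsurj Q'
    refine ⟨q₁, q₂, ?_, ?_, hsub he₁, hsub he₂⟩
    · rw [← hπ, ← h₁]; rfl
    · rw [← hπ, ← h₂]; rfl
end

section
/- Let a finite path s_1 a_1 s_2 … s_n be given together with capacities cap ≤ cap'. For every index i, if the i-th resource level of the path with capacity cap is defined (not ⊥) with value x, then the i-th resource level with capacity cap' is also defined and has value at least x. -/
open Classical in
/-- The resource levels `r_1, …, r_n` of a finite path.  A path starting at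
state `s` with steps `(a_1, s_2), (a_2, s_3), …` is represented by `s` and the
list of (action, next-state) pairs.  `resLevelsAux γ R cap s r steps` is the
list of levels starting with the current level `r`; `⊥` is `none`. -/
noncomputable def resLevelsAux {S A : Type*} (γ : S → A → ℕ) (R : Set S) (cap : ℕ) :
    S → Option ℕ → List (A × S) → List (Option ℕ)
  | _, r, [] => [r]
  | s, r, (a, t) :: rest =>
      r :: resLevelsAux γ R cap t
        (match r with
         | none => none
         | some x =>
            if s ∈ R then (if γ s a ≤ cap then some (cap - γ s a) else none)
            else (if γ s a ≤ x then some (x - γ s a) else none))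
        rest

/-- The resource levels of the path `(s, steps)` with capacity `cap`
(the first level is `cap`). -/
noncomputable def resLevels {S A : Type*} (γ : S → A → ℕ) (R : Set S) (cap : ℕ)
    (s : S) (steps : List (A × S)) : List (Option ℕ) :=
  resLevelsAux γ R cap s (some cap) steps

private lemma resLevelsAux_mono {S A : Type*} (γ : S → A → ℕ) (R : Set S)
    (cap cap' : ℕ) (hcap : cap ≤ cap') :
    ∀ (steps : List (A × S)) (s : S) (r r' : Option ℕ),
      (∀ x : ℕ, r = some x → ∃ y : ℕ, r' = some y ∧ x ≤ y) →
      ∀ (i : ℕ) (x : ℕ), (resLevelsAux γ R cap s r steps)[i]? = some (some x) →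
        ∃ y : ℕ, (resLevelsAux γ R cap' s r' steps)[i]? = some (some y) ∧ x ≤ y := by
  intro steps
  induction steps with
  | nil =>
    intro s r r' h i x hx
    cases i with
    | zero =>
      simp only [resLevelsAux, List.getElem?_cons_zero, Option.some.injEq] at hx ⊢
      obtain ⟨y, hy, hxy⟩ := h x hx
      exact ⟨y, hy, hxy⟩
    | succ n => simp [resLevelsAux] at hx
  | cons p rest ih =>
    obtain ⟨a, t⟩ := p
    intro s r r' h i x hx
    cases i with
    | zero =>
      simp only [resLevelsAux, List.getElem?_cons_zero, Option.some.injEq] at hx ⊢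
      obtain ⟨y, hy, hxy⟩ := h x hx
      exact ⟨y, hy, hxy⟩
    | succ n =>
      simp only [resLevelsAux, List.getElem?_cons_succ] at hx ⊢
      refine ih t _ _ ?_ n x hx
      intro z hz
      cases r with
      | none => simp at hz
      | some w =>
        obtain ⟨w', hw', hww'⟩ := h w rfl
        cases r' with
        | none => simp at hw'
        | some v =>
          simp only [Option.some.injEq] at hw'; subst hw'
          simp only at hz ⊢
          by_cases hs : s ∈ R
          · simp only [if_pos hs] at hz ⊢
            split_ifs at hz with h1
            · simp only [Option.some.injEq] at hz
              have h2 : γ s a ≤ cap' := h1.trans hcap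
              exact ⟨cap' - γ s a, by simp [h2], by omega⟩
          · simp only [if_neg hs] at hz ⊢
            split_ifs at hz with h1
            · simp only [Option.some.injEq] at hz
              have h2 : γ s a ≤ v := h1.trans hww'
              exact ⟨v - γ s a, by simp [h2, hz.symm], by omega⟩

theorem resLevels_mono_cap {S A : Type*} (γ : S → A → ℕ) (R : Set S)
    (cap cap' : ℕ) (hcap : cap ≤ cap') (s : S) (steps : List (A × S)) :
    ∀ (i : ℕ) (x : ℕ), (resLevels γ R cap s steps)[i]? = some (some x) →
      ∃ y : ℕ, (resLevels γ R cap' s steps)[i]? = some (some y) ∧ x ≤ y := by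
  exact resLevelsAux_mono γ R cap cap' hcap steps s (some cap) (some cap')
    (fun x hx => ⟨cap', rfl, by simp_all⟩)
end

section
/- Let α = s_1 a_1 … s_m be a finite path whose last state s_m = t is a reload state (t ∈ R), and let β = t b_1 t_2 … t_k be a finite path starting at t. If α is safe with capacity cap and β is safe with capacity cap, then the concatenated path α·β = s_1 a_1 … s_m b_1 t_2 … t_k (gluing the endpoint t of α with the start of β) is safe with capacity cap. -/
/-- A path is safe with capacity `cap` if `⊥` does not occur among its
resource levels. -/
noncomputable def SafePath {S A : Type*} (γ : S → A → ℕ) (R : Set S) (cap : ℕ)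
    (s : S) (steps : List (A × S)) : Prop :=
  none ∉ resLevels γ R cap s steps

/-- The last state of the path `(s, steps)`. -/
def lastState {S A : Type*} (s : S) (steps : List (A × S)) : S :=
  (steps.getLast?.map Prod.snd).getD s


lemma lastState_cons {S A : Type*} (s u : S) (a : A) (rest : List (A × S)) :
    lastState s ((a, u) :: rest) = lastState u rest := by
  cases rest with
  | nil => simp [lastState]
  | cons p l =>
    simp only [lastState]
    rw [List.getLast?_eq_getLast (List.cons_ne_nil _ _), List.getLast?_eq_getLast (List.cons_ne_nil _ _)]
    simp

lemma resLevelsAux_reload {S A : Type*} (γ : S → A → ℕ) (R : Set S) (cap : ℕ)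
    (t : S) (htR : t ∈ R) (x : ℕ) (steps : List (A × S))
    (h : none ∉ resLevelsAux γ R cap t (some cap) steps) :
    none ∉ resLevelsAux γ R cap t (some x) steps := by
  cases steps with
  | nil => simp [resLevelsAux]
  | cons p rest =>
    obtain ⟨a, u⟩ := p
    simp only [resLevelsAux, List.mem_cons, htR, if_pos] at h ⊢
    tauto

lemma resLevelsAux_append {S A : Type*} (γ : S → A → ℕ) (R : Set S) (cap : ℕ)
    (steps₂ : List (A × S)) :
    ∀ (steps₁ : List (A × S)) (s : S) (r : ℕ),
      none ∉ resLevelsAux γ R cap s (some r) steps₁ →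
      lastState s steps₁ ∈ R →
      none ∉ resLevelsAux γ R cap (lastState s steps₁) (some cap) steps₂ →
      none ∉ resLevelsAux γ R cap s (some r) (steps₁ ++ steps₂) := by
  intro steps₁
  induction steps₁ with
  | nil =>
    intro s r _ hR hβ
    simp only [lastState, List.getLast?, Option.map_none, Option.getD_none] at hR hβ
    exact resLevelsAux_reload γ R cap s hR r steps₂ hβ
  | cons p rest ih =>
    obtain ⟨a, u⟩ := p
    intro s r hα hR hβ
    classical
    rw [lastState_cons] at hR hβ
    simp only [List.cons_append, resLevelsAux, List.mem_cons] at hα ⊢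
    push_neg at hα ⊢
    refine ⟨hα.1, ?_⟩
    rcases hα with ⟨-, hα⟩
    set nxt := (if s ∈ R then (if γ s a ≤ cap then some (cap - γ s a) else none)
            else (if γ s a ≤ r then some (r - γ s a) else none)) with hnxt
    match hx : nxt with
    | none =>
      exfalso; apply hα
      cases rest with
      | nil => simp [resLevelsAux]
      | cons q l => obtain ⟨b, v⟩ := q; simp [resLevelsAux]
    | some x => exact ih u x (hx ▸ hα) hR hβ

theorem safePath_append_at_reload {S A : Type*} (γ : S → A → ℕ) (R : Set S)
    (cap : ℕ) (s t : S) (steps₁ steps₂ : List (A × S))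
    (hlast : lastState s steps₁ = t) (htR : t ∈ R)
    (hα : SafePath γ R cap s steps₁) (hβ : SafePath γ R cap t steps₂) :
    SafePath γ R cap s (steps₁ ++ steps₂) := by
  subst hlast
  exact resLevelsAux_append γ R cap steps₂ steps₁ s cap hα htR hβ
end
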